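/- For all n ∈ ℕ and all 0 ≤ i, j ≤ n, if p ∈ P^{L_n}_{i,j} and p contains two fall steps π₁ and π₂ with weights ω(π₁) = t_{y₁,s₁} and ω(π₂) = t_{y₂,s₂} (so π_k is a fall step starting at height y_k and s_k = x_k + y_k − n where x_k is its starting abscissa), then y₁ < y₂ implies s₁ ≥ s₂. -/
import Mathlib


/-- The heights of an `L^m_n`-path of order `n` (the abscissas `x i = m + i` are
determined, so only the heights `y i ∈ {0, …, n}`, encoded as `Fin (n+1)`, are recorded):
`y (k+1) ∈ {y k, y k - 1}` and a fall step at position `k` forces `y k ≥ n - k`. -/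
def IsLPath (n : ℕ) (y : Fin (n + 1) → Fin (n + 1)) : Prop :=
  ∀ k : Fin n,
    ((y k.succ = y k.castSucc ∨ (y k.succ : ℕ) + 1 = (y k.castSucc : ℕ)) ∧
      ((y k.succ : ℕ) + 1 = (y k.castSucc : ℕ) → n - (k : ℕ) ≤ (y k.castSucc : ℕ)))

lemma yval_congr {n : ℕ} (y : Fin (n + 1) → Fin (n + 1)) {a b : ℕ}
    (ha : a < n + 1) (hb : b < n + 1) (h : a = b) :
    (y ⟨a, ha⟩ : ℕ) = (y ⟨b, hb⟩ : ℕ) := by subst h; rfl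

lemma lpath_step {n : ℕ} {y : Fin (n + 1) → Fin (n + 1)} (hp : IsLPath n y)
    (a : ℕ) (ha : a < n) :
    (y ⟨a, by omega⟩ : ℕ) ≤ (y ⟨a + 1, by omega⟩ : ℕ) + 1 := by
  have := (hp ⟨a, ha⟩).1
  rcases this with h | h
  · have : (y (Fin.succ ⟨a, ha⟩) : ℕ) = (y (Fin.castSucc ⟨a, ha⟩) : ℕ) := by rw [h]
    simp only [Fin.succ, Fin.castSucc, Fin.castAdd, Fin.castLE] at this ⊢
    omega
  · simp only [Fin.succ, Fin.castSucc, Fin.castAdd, Fin.castLE] at h ⊢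
    omega

lemma lpath_descent {n : ℕ} {y : Fin (n + 1) → Fin (n + 1)} (hp : IsLPath n y) :
    ∀ d a : ℕ, (h : a + d ≤ n) →
      (y ⟨a, by omega⟩ : ℕ) ≤ (y ⟨a + d, by omega⟩ : ℕ) + d := by
  intro d
  induction d with
  | zero => intro a h; simp
  | succ d ih =>
      intro a h
      have h1 := lpath_step hp a (by omega)
      have h2 := ih (a + 1) (by omega)
      have he : (y ⟨a + 1 + d, by omega⟩ : ℕ) = (y ⟨a + (d + 1), by omega⟩ : ℕ) :=
        yval_congr y (by omega) (by omega) (by omega)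
      omega

lemma lpath_anti {n : ℕ} {y : Fin (n + 1) → Fin (n + 1)} (hp : IsLPath n y) :
    ∀ d a : ℕ, (h : a + d ≤ n) →
      (y ⟨a + d, by omega⟩ : ℕ) ≤ (y ⟨a, by omega⟩ : ℕ) := by
  intro d
  induction d with
  | zero => intro a h; simp
  | succ d ih =>
      intro a h
      have h1 : (y ⟨a + d + 1, by omega⟩ : ℕ) ≤ (y ⟨a + d, by omega⟩ : ℕ) := by
        rcases (hp ⟨a + d, by omega⟩).1 with h' | h' <;>
          simp only [Fin.succ, Fin.castSucc, Fin.castAdd, Fin.castLE] at h' <;>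
          [skip; omega]
        have : (y ⟨a + d + 1, by omega⟩ : ℕ) = (y ⟨a + d, by omega⟩ : ℕ) := by rw [h']
        omega
      have h2 := ih a (by omega)
      have he : (y ⟨a + (d + 1), by omega⟩ : ℕ) = (y ⟨a + d + 1, by omega⟩ : ℕ) :=
        yval_congr y (by omega) (by omega) (by omega)
      omega

/-- If `p ∈ P^{L_n}_{i,j}` has two fall steps `π₁`, `π₂` — the step `πₖ` starting at the
point `(xₖ, yₖ)` and carrying the weight `t yₖ sₖ` with `sₖ = xₖ + yₖ - n` — then
`y₁ < y₂` implies `s₁ ≥ s₂`. -/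
theorem stmt7 (n : ℕ) (i j : Fin (n + 1)) (y : Fin (n + 1) → Fin (n + 1))
    (hp : IsLPath n y) (h0 : y 0 = i) (hn : y (Fin.last n) = j)
    (k₁ k₂ : Fin n)
    (hf₁ : (y k₁.succ : ℕ) + 1 = (y k₁.castSucc : ℕ))
    (hf₂ : (y k₂.succ : ℕ) + 1 = (y k₂.castSucc : ℕ))
    (hlt : (y k₁.castSucc : ℕ) < (y k₂.castSucc : ℕ)) :
    (k₂ : ℕ) + (y k₂.castSucc : ℕ) - n ≤ (k₁ : ℕ) + (y k₁.castSucc : ℕ) - n := by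
  -- First: k₂ < k₁, since heights are nonincreasing.
  have hk : (k₂ : ℕ) < (k₁ : ℕ) := by
    by_contra hc
    push_neg at hc
    have ha := lpath_anti hp ((k₂ : ℕ) - (k₁ : ℕ)) (k₁ : ℕ) (by omega)
    have he : (y ⟨(k₁ : ℕ) + ((k₂ : ℕ) - (k₁ : ℕ)), by omega⟩ : ℕ) = (y ⟨(k₂ : ℕ), by omega⟩ : ℕ) :=
      yval_congr y (by omega) (by omega) (by omega)
    have hc1 : (y k₁.castSucc : ℕ) = (y ⟨(k₁ : ℕ), by omega⟩ : ℕ) := by congr 1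
    have hc2 : (y k₂.castSucc : ℕ) = (y ⟨(k₂ : ℕ), by omega⟩ : ℕ) := by congr 1
    omega
  -- Now use descent from k₂+1 to k₁.
  have hd := lpath_descent hp ((k₁ : ℕ) - ((k₂ : ℕ) + 1)) ((k₂ : ℕ) + 1) (by omega)
  have he : (y ⟨(k₂ : ℕ) + 1 + ((k₁ : ℕ) - ((k₂ : ℕ) + 1)), by omega⟩ : ℕ) = (y ⟨(k₁ : ℕ), by omega⟩ : ℕ) :=
    yval_congr y (by omega) (by omega) (by omega)
  have hs2 : (y k₂.succ : ℕ) = (y ⟨(k₂ : ℕ) + 1, by omega⟩ : ℕ) := by congr 1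
  have hc1 : (y k₁.castSucc : ℕ) = (y ⟨(k₁ : ℕ), by omega⟩ : ℕ) := by congr 1
  omega
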